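/- The language L_o = { aᵐbⁿ : m,n ≥ 0 and m ≤ n ≤ 2m } over the alphabet {a,b} is accepted by a stateless sensing 5'→3' WK automaton (namely the one with a single state q and transitions {q} = δ(q,a,b) and {q} = δ(q,a,bb)), but L_o is not accepted by any deterministic sensing 5'→3' WK automaton. -/

import Mathlib

open Computability

/-- The two-letter alphabet `{a, b}`. -/
inductive Letter : Type
  | a : Letter
  | b : Letter
deriving DecidableEq

instance : Fintype Letter :=
  ⟨⟨{Letter.a, Letter.b}, by simp⟩, fun x => by cases x <;> simp⟩

open Letter

/-- A sensing 5'→3' Watson-Crick automaton over the alphabet `T` with state set `Q`: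
an initial state `q0`, a set `F` of final states, and a transition mapping
`δ : Q × T* × T* → 2^Q` that is nonempty for only finitely many triples. -/
structure WKAutomaton (T : Type) (Q : Type) where
  q0 : Q
  F : Set Q
  δ : Q → List T → List T → Set Q
  finite_delta : {t : Q × List T × List T | (δ t.1 t.2.1 t.2.2).Nonempty}.Finite

namespace WKAutomaton

variable {T Q : Type}

/-- One computation step on configurations:
`(q, x ++ w' ++ y) ⇒ (q', w')` iff `q' ∈ δ q x y`. -/
def Step (A : WKAutomaton T Q) (c c' : Q × List T) : Prop :=
  ∃ x y : List T, c.2 = x ++ c'.2 ++ y ∧ c'.1 ∈ A.δ c.1 x y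

/-- The accepted language: words `w` with `(q₀, w) ⇒* (q_F, λ)` for some final `q_F`. -/
def Lang (A : WKAutomaton T Q) : Set (List T) :=
  {w | ∃ qf ∈ A.F, Relation.ReflTransGen A.Step (A.q0, w) (qf, [])}

/-- `A` is deterministic: in every configuration at most one computation step
(choice of `x`, `y`, `w'`, `q'`) is applicable. -/
def Deterministic (A : WKAutomaton T Q) : Prop :=
  ∀ (q : Q) (w x₁ y₁ w₁ x₂ y₂ w₂ : List T) (q₁ q₂ : Q),
    w = x₁ ++ w₁ ++ y₁ → q₁ ∈ A.δ q x₁ y₁ →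
    w = x₂ ++ w₂ ++ y₂ → q₂ ∈ A.δ q x₂ y₂ →
    x₁ = x₂ ∧ y₁ = y₂ ∧ w₁ = w₂ ∧ q₁ = q₂

/-- `A` is quasi-deterministic: for every configuration `(q,w)`, whenever
`(q,w) ⇒ (p,u)` and `(q,w) ⇒ (r,v)`, it holds that `p = r`. -/
def QuasiDet (A : WKAutomaton T Q) : Prop :=
  ∀ (q : Q) (w : List T) (p r : Q) (u v : List T),
    A.Step (q, w) (p, u) → A.Step (q, w) (r, v) → p = r

/-- `A` is state-deterministic: for every state `q` there is at most one state `p`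
with `p ∈ δ(q,u,v)` for some words `u`, `v`. -/
def StateDet (A : WKAutomaton T Q) : Prop :=
  ∀ (q p₁ p₂ : Q) (u₁ v₁ u₂ v₂ : List T),
    p₁ ∈ A.δ q u₁ v₁ → p₂ ∈ A.δ q u₂ v₂ → p₁ = p₂

/-- `A` is stateless: `Q = F = {q₀}`. -/
def Stateless (A : WKAutomaton T Q) : Prop :=
  (∀ q : Q, q = A.q0) ∧ A.F = {A.q0}

/-- `A` is all-final: `Q = F`. -/
def AllFinal (A : WKAutomaton T Q) : Prop := A.F = Set.univ

/-- `A` is simple: at most one head reads in each step. -/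
def Simple (A : WKAutomaton T Q) : Prop :=
  ∀ (q : Q) (u v : List T), (A.δ q u v).Nonempty → u = [] ∨ v = []

/-- `A` is 1-limited: exactly one letter is read in each step. -/
def OneLimited (A : WKAutomaton T Q) : Prop :=
  ∀ (q : Q) (u v : List T), (A.δ q u v).Nonempty →
    (u = [] ∧ v.length = 1) ∨ (u.length = 1 ∧ v = [])

end WKAutomaton

/-- Equality of languages modulo the empty word. -/
def EqModLambda {T : Type} (L₁ L₂ : Set (List T)) : Prop :=
  ∀ w : List T, w ≠ [] → (w ∈ L₁ ↔ w ∈ L₂)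

/-- `L` is accepted (modulo the empty word) by some sensing 5'→3' WK automaton
with a finite state set satisfying the property `P`. -/
def AcceptsWith (T : Type) (P : ∀ Q : Type, WKAutomaton T Q → Prop)
    (L : Set (List T)) : Prop :=
  ∃ (Q : Type) (_ : Finite Q) (A : WKAutomaton T Q), P Q A ∧ EqModLambda A.Lang L

/-- The language `L_o = { aᵐbⁿ : m ≤ n ≤ 2m }`. -/
def Lo : Set (List Letter) :=
  {w | ∃ m n : ℕ, m ≤ n ∧ n ≤ 2 * m ∧ w = List.replicate m a ++ List.replicate n b}

/-!
On a word `aᵐbⁿ` a WK automaton only meets configurations `(q, aⁱbʲ)`, and a step that leaves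
an `a` (resp. a `b`) unread stays a step when the block of `a`s (resp. `b`s) is lengthened. So a
cycle `(q, aⁱ⁺ᵅbʲ⁺ᵝ) ⇒* (q, aⁱbʲ)` can be pumped, and for a deterministic automaton pumping it
does not change acceptance.

Started on a large word, a deterministic automaton first runs through a cycle that consumes
`(α, β)` letters, the same for all large words. If `β < 2α`, on `aᵐb²ᵐ` it runs out of `a`s while
many `b`s remain; the rest of the run repeats a state together with the number of `a`s left, and
pumping the `b`s then yields an accepted word outside `L_o`. If `β ≥ 2α`, the same happens with
`a` and `b` exchanged on `aᵐbᵐ`.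
-/

open Relation Function

namespace Letter

def ab (i j : ℕ) : List Letter := List.replicate i a ++ List.replicate j b

@[simp] lemma count_a_ab (i j : ℕ) : (ab i j).count a = i := by
  simp [ab, List.count_replicate]

@[simp] lemma count_b_ab (i j : ℕ) : (ab i j).count b = j := by
  simp [ab, List.count_replicate]

lemma ab_inj {i j i' j' : ℕ} : ab i j = ab i' j' ↔ i = i' ∧ j = j' := by
  refine ⟨fun h => ⟨?_, ?_⟩, by rintro ⟨rfl, rfl⟩; rfl⟩
  · simpa using congrArg (List.count a) h
  · simpa using congrArg (List.count b) h

lemma ab_eq_nil {i j : ℕ} : ab i j = [] ↔ i = 0 ∧ j = 0 := by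
  simp [ab]

lemma ab_mem_Lo {m n : ℕ} : ab m n ∈ Lo ↔ m ≤ n ∧ n ≤ 2 * m := by
  refine ⟨fun ⟨m', n', h₁, h₂, h⟩ => ?_, fun ⟨h₁, h₂⟩ => ⟨m, n, h₁, h₂, rfl⟩⟩
  obtain ⟨rfl, rfl⟩ := ab_inj.1 h
  exact ⟨h₁, h₂⟩

lemma ab_succ_add (m n k : ℕ) : ab (m + 1) (n + k) = [a] ++ ab m n ++ List.replicate k b := by
  rw [ab, ab, List.replicate_succ, ← List.replicate_append_replicate]
  simp only [List.cons_append, List.nil_append, List.append_assoc]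

lemma ab_add_left (i j d : ℕ) : ab (i + d) j = List.replicate d a ++ ab i j := by
  rw [ab, ab, ← List.append_assoc, List.replicate_append_replicate, Nat.add_comm]

lemma ab_add_right (i j e : ℕ) : ab i (j + e) = ab i j ++ List.replicate e b := by
  rw [ab, ab, List.append_assoc, List.replicate_append_replicate]

def Sorted (w : List Letter) : Prop := w.Pairwise fun u v => u = b → v = b

lemma sorted_ab (i j : ℕ) : Sorted (ab i j) := by
  simp [Sorted, ab, List.pairwise_append, List.pairwise_replicate]

lemma eq_ab_of_sorted {w : List Letter} (hw : Sorted w) : w = ab (w.count a) (w.count b) := by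
  induction w with
  | nil => rfl
  | cons u w ih =>
    rw [Sorted, List.pairwise_cons] at hw
    cases u
    · conv_lhs => rw [ih hw.2]
      simp [ab, List.replicate_succ]
    · have hw' : w = List.replicate w.length b :=
        List.eq_replicate_iff.2 ⟨rfl, fun v hv => hw.1 v hv rfl⟩
      rw [hw']
      simp [ab, List.count_replicate, ← List.replicate_succ]

lemma eq_ab_of_infix {w : List Letter} {i j : ℕ} (h : w <:+: ab i j) :
    w = ab (w.count a) (w.count b) :=
  eq_ab_of_sorted ((sorted_ab i j).sublist h.sublist)

lemma ab_add_left_eq {x y : List Letter} {i j i' j' : ℕ} (h : ab i j = x ++ ab i' j' ++ y)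
    (hi' : 0 < i') (d : ℕ) : ab (i + d) j = x ++ ab (i' + d) j' ++ y := by
  have hs := sorted_ab i j
  rw [h, Sorted, List.append_assoc, List.pairwise_append] at hs
  have hx : x = List.replicate x.length a := by
    refine List.eq_replicate_iff.2 ⟨rfl, fun u hu => ?_⟩
    have := hs.2.2 u hu a (by simp [ab]; omega)
    cases u <;> simp_all
  rw [ab_add_left, ab_add_left, h, hx]
  simp only [← List.append_assoc, List.replicate_append_replicate, Nat.add_comm]

lemma ab_add_right_eq {x y : List Letter} {i j i' j' : ℕ} (h : ab i j = x ++ ab i' j' ++ y)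
    (hj' : 0 < j') (e : ℕ) : ab i (j + e) = x ++ ab i' (j' + e) ++ y := by
  have hs := sorted_ab i j
  rw [h, Sorted, List.pairwise_append] at hs
  have hy : y = List.replicate y.length b :=
    List.eq_replicate_iff.2 ⟨rfl, fun v hv => hs.2.2 b (by simp [ab]; omega) v hv rfl⟩
  rw [ab_add_right, ab_add_right, h, hy]
  simp only [List.append_assoc, List.replicate_append_replicate, Nat.add_comm]

end Letter

open Letter

def loAutomaton : WKAutomaton Letter Unit where
  q0 := ()
  F := {()}
  δ _ x y := {_u | x = [a] ∧ (y = [b] ∨ y = [b, b])}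
  finite_delta := by
    refine ((Set.finite_singleton ((), [a], [b, b])).insert ((), [a], [b])).subset ?_
    rintro ⟨_, x, y⟩ ⟨_, rfl, rfl | rfl⟩ <;> simp

lemma loAutomaton_step_iff {w w' : List Letter} :
    loAutomaton.Step ((), w) ((), w') ↔ w = [a] ++ w' ++ [b] ∨ w = [a] ++ w' ++ [b, b] := by
  constructor
  · rintro ⟨x, y, hw, rfl, rfl | rfl⟩
    exacts [Or.inl hw, Or.inr hw]
  · rintro (h | h)
    exacts [⟨[a], [b], h, rfl, Or.inl rfl⟩, ⟨[a], [b, b], h, rfl, Or.inr rfl⟩]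

lemma loAutomaton_lang : loAutomaton.Lang = Lo := by
  ext w
  constructor
  · rintro ⟨⟨⟩, -, h⟩
    suffices ∀ c, ReflTransGen loAutomaton.Step c ((), []) → c.2 ∈ Lo from this _ h
    intro c h
    induction h using ReflTransGen.head_induction_on with
    | refl => exact ⟨0, 0, le_rfl, le_rfl, rfl⟩
    | head hstep _ ih =>
      obtain ⟨m, n, h₁, h₂, hw⟩ := ih
      rcases loAutomaton_step_iff.1 hstep with h | h
      · exact ⟨m + 1, n + 1, by omega, by omega, by rw [h, hw]; exact (ab_succ_add m n 1).symm⟩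
      · exact ⟨m + 1, n + 2, by omega, by omega, by rw [h, hw]; exact (ab_succ_add m n 2).symm⟩
  · rintro ⟨m, n, h₁, h₂, rfl⟩
    refine ⟨(), rfl, ?_⟩
    induction m generalizing n with
    | zero =>
      obtain rfl : n = 0 := by omega
      rfl
    | succ m ih =>
      by_cases hn : n ≤ 2 * m + 1
      · obtain ⟨n, rfl⟩ : ∃ n', n = n' + 1 := ⟨n - 1, by omega⟩
        exact .head (loAutomaton_step_iff.2 (.inl (ab_succ_add m n 1))) (ih n (by omega) (by omega))
      · obtain ⟨n, rfl⟩ : ∃ n', n = n' + 2 := ⟨n - 2, by omega⟩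
        exact .head (loAutomaton_step_iff.2 (.inr (ab_succ_add m n 2))) (ih n (by omega) (by omega))

namespace Relation

variable {α : Type*} {r : α → α → Prop}

open Classical in
noncomputable def succOrSelf (r : α → α → Prop) (x : α) : α :=
  if h : ∃ y, r x y then h.choose else x

lemma succOrSelf_spec (r : α → α → Prop) (x : α) :
    r x (succOrSelf r x) ∨ succOrSelf r x = x := by
  unfold succOrSelf
  split_ifs with h
  exacts [Or.inl h.choose_spec, Or.inr rfl]

lemma reflTransGen_iterate_succOrSelf (n : ℕ) (x : α) :
    ReflTransGen r x ((succOrSelf r)^[n] x) := by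
  induction n with
  | zero => rfl
  | succ n ih =>
    rw [iterate_succ_apply']
    rcases succOrSelf_spec r ((succOrSelf r)^[n] x) with h | h
    · exact ih.tail h
    · rwa [h]

end Relation

namespace Relator.RightUnique

open Relation

variable {α : Type*} {r : α → α → Prop} {x y z : α}

lemma succOrSelf_eq (hr : RightUnique r) (h : r x y) : succOrSelf r x = y := by
  unfold succOrSelf
  rw [dif_pos ⟨y, h⟩]
  exact hr (Exists.choose_spec _) h

lemma exists_iterate_succOrSelf_eq (hr : RightUnique r) (h : ReflTransGen r x y) :
    ∃ n, (succOrSelf r)^[n] x = y := by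
  induction h using ReflTransGen.head_induction_on with
  | refl => exact ⟨0, rfl⟩
  | head hxz _ ih =>
    obtain ⟨n, hn⟩ := ih
    exact ⟨n + 1, by rw [iterate_succ_apply, hr.succOrSelf_eq hxz, hn]⟩

lemma reflTransGen_of_isPeriodicPt (hr : RightUnique r) {n : ℕ}
    (hx : IsPeriodicPt (succOrSelf r) n x) (hn : 0 < n) (h : ReflTransGen r x y) :
    ReflTransGen r y x := by
  obtain ⟨k, rfl⟩ := hr.exists_iterate_succOrSelf_eq h
  obtain ⟨n, rfl⟩ := Nat.exists_eq_add_of_lt hn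
  have hback := reflTransGen_iterate_succOrSelf (r := r) (n * k) ((succOrSelf r)^[k] x)
  rwa [← iterate_add_apply, show n * k + k = (0 + n + 1) * k by ring,
    (hx.mul_const k).eq] at hback

lemma reflTransGen_iff_of_reflTransGen (hr : RightUnique r) (hxy : ReflTransGen r x y)
    (hzy : ¬ ReflTransGen r z y) : ReflTransGen r x z ↔ ReflTransGen r y z :=
  ⟨fun hxz => (hxy.total_of_right_unique hr hxz).resolve_right hzy, hxy.trans⟩

end Relator.RightUnique

namespace WKAutomaton

variable {Q : Type} (A : WKAutomaton Letter Q)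

/-- A step between configurations `(q, aⁱbʲ)`, written as triples `(q, i, j)`. -/
def AbStep (c c' : Q × ℕ × ℕ) : Prop :=
  A.Step (c.1, ab c.2.1 c.2.2) (c'.1, ab c'.2.1 c'.2.2)

def AbAccepts (c : Q × ℕ × ℕ) : Prop :=
  ∃ qf ∈ A.F, ReflTransGen A.AbStep c (qf, 0, 0)

def ConsumesAtMost (K : ℕ) : Prop :=
  ∀ c c', A.AbStep c c' → c.2.1 ≤ c'.2.1 + K ∧ c.2.2 ≤ c'.2.2 + K

variable {A}

lemma ab_mem_lang_iff {m n : ℕ} : ab m n ∈ A.Lang ↔ A.AbAccepts (A.q0, m, n) := by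
  refine ⟨fun ⟨qf, hqf, h⟩ => ⟨qf, hqf, ?_⟩, fun ⟨qf, hqf, h⟩ => ⟨qf, hqf,
    ReflTransGen.lift (fun c : Q × ℕ × ℕ => (c.1, ab c.2.1 c.2.2)) (fun _ _ h => h) _ _ h⟩⟩
  suffices ∀ c, ReflTransGen A.Step c (qf, []) → ∀ q i j, c = (q, ab i j) →
      ReflTransGen A.AbStep (q, i, j) (qf, 0, 0) from this _ h _ _ _ rfl
  intro c h
  induction h using ReflTransGen.head_induction_on with
  | refl =>
    intro q i j hc
    obtain ⟨rfl, hij⟩ := Prod.ext_iff.1 hc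
    obtain ⟨rfl, rfl⟩ := ab_eq_nil.1 hij.symm
    rfl
  | head hstep _ ih =>
    rintro q i j rfl
    obtain ⟨x, y, hw, hq⟩ := hstep
    have hc := eq_ab_of_infix ⟨x, y, hw.symm⟩
    refine ReflTransGen.head ?_ (ih _ _ _ (Prod.ext rfl hc))
    rw [AbStep, ← hc]
    exact ⟨x, y, hw, hq⟩

lemma Deterministic.abStep_rightUnique (hA : A.Deterministic) :
    Relator.RightUnique A.AbStep := by
  rintro c c₁ c₂ ⟨x₁, y₁, hw₁, hq₁⟩ ⟨x₂, y₂, hw₂, hq₂⟩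
  obtain ⟨-, -, hw, hq⟩ := hA _ _ _ _ _ _ _ _ _ _ hw₁ hq₁ hw₂ hq₂
  obtain ⟨hi, hj⟩ := ab_inj.1 hw
  exact Prod.ext hq (Prod.ext hi hj)

lemma AbStep.count_le {c c' : Q × ℕ × ℕ} (h : A.AbStep c c') :
    c'.2.1 ≤ c.2.1 ∧ c'.2.2 ≤ c.2.2 := by
  obtain ⟨x, y, hw, -⟩ := h
  have ha := congrArg (List.count a) hw
  have hb := congrArg (List.count b) hw
  simp only [List.count_append, count_a_ab, count_b_ab] at ha hb
  omega

lemma reflTransGen_abStep_count_le {c c' : Q × ℕ × ℕ} (h : ReflTransGen A.AbStep c c') :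
    c'.2.1 ≤ c.2.1 ∧ c'.2.2 ≤ c.2.2 := by
  induction h with
  | refl => exact ⟨le_rfl, le_rfl⟩
  | tail _ hstep ih =>
    have := hstep.count_le
    omega

variable (A) in
lemma exists_consumesAtMost : ∃ K, A.ConsumesAtMost K := by
  obtain ⟨K, hK⟩ := (A.finite_delta.image fun t => t.2.1.length + t.2.2.length).bddAbove
  refine ⟨K, fun c c' ⟨x, y, hw, hq⟩ => ?_⟩
  have hxy : x.length + y.length ≤ K := hK ⟨(c.1, x, y), ⟨_, hq⟩, rfl⟩
  have ha := congrArg (List.count a) hw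
  have hb := congrArg (List.count b) hw
  simp only [List.count_append, count_a_ab, count_b_ab] at ha hb
  have := List.count_le_length (a := a) (l := x)
  have := List.count_le_length (a := a) (l := y)
  have := List.count_le_length (a := b) (l := x)
  have := List.count_le_length (a := b) (l := y)
  omega

lemma AbStep.add {c c' : Q × ℕ × ℕ} (h : A.AbStep c c') {d e : ℕ}
    (hd : d = 0 ∨ 0 < c'.2.1) (he : e = 0 ∨ 0 < c'.2.2) :
    A.AbStep (c.1, c.2.1 + d, c.2.2 + e) (c'.1, c'.2.1 + d, c'.2.2 + e) := by
  obtain ⟨x, y, hw, hq⟩ := h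
  refine ⟨x, y, ?_, hq⟩
  have hw' : ab (c.2.1 + d) c.2.2 = x ++ ab (c'.2.1 + d) c'.2.2 ++ y := by
    rcases hd with rfl | hd
    · exact hw
    · exact ab_add_left_eq hw hd d
  rcases he with rfl | he
  · exact hw'
  · exact ab_add_right_eq hw' he e

lemma reflTransGen_abStep_add {c c' : Q × ℕ × ℕ} (h : ReflTransGen A.AbStep c c') {d e : ℕ}
    (hd : d = 0 ∨ 0 < c'.2.1) (he : e = 0 ∨ 0 < c'.2.2) :
    ReflTransGen A.AbStep (c.1, c.2.1 + d, c.2.2 + e) (c'.1, c'.2.1 + d, c'.2.2 + e) := by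
  induction h with
  | refl => rfl
  | tail _ hstep ih =>
    have := hstep.count_le
    exact (ih (hd.imp_right (by omega)) (he.imp_right (by omega))).tail (hstep.add hd he)

lemma reflTransGen_abStep_of_cycle {p q : Q} {m n i j α β : ℕ}
    (h₁ : ReflTransGen A.AbStep (p, m, n) (q, i + α, j + β))
    (h₂ : ReflTransGen A.AbStep (q, i + α, j + β) (q, i, j)) (hi : 0 < i) (hj : 0 < j)
    (k d e : ℕ) : ReflTransGen A.AbStep (p, m + k * α + d, n + k * β + e) (q, i + d, j + e) := by
  have hcycle (d e : ℕ) : ReflTransGen A.AbStep (q, i + α + d, j + β + e) (q, i + d, j + e) :=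
    reflTransGen_abStep_add h₂ (Or.inr hi) (Or.inr hj)
  induction k generalizing d e with
  | zero =>
    simpa using (reflTransGen_abStep_add h₁ (Or.inr (Nat.add_pos_left hi α))
      (Or.inr (Nat.add_pos_left hj β))).trans (hcycle d e)
  | succ k ih =>
    have h := ih (d + α) (e + β)
    rw [← add_assoc i, add_right_comm i, ← add_assoc j, add_right_comm j] at h
    convert h.trans (hcycle d e) using 3 <;> ring

lemma ConsumesAtMost.count_le_iterate_add {K : ℕ} (hK : A.ConsumesAtMost K) (k : ℕ)
    (c : Q × ℕ × ℕ) :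
    c.2.1 ≤ ((succOrSelf A.AbStep)^[k] c).2.1 + k * K ∧
      c.2.2 ≤ ((succOrSelf A.AbStep)^[k] c).2.2 + k * K := by
  induction k with
  | zero => simp
  | succ k ih =>
    rw [iterate_succ_apply']
    rcases succOrSelf_spec A.AbStep ((succOrSelf A.AbStep)^[k] c) with h | h
    · have := hK _ _ h
      rw [Nat.succ_mul]
      omega
    · rw [h, Nat.succ_mul]
      omega

namespace Deterministic

variable (hA : A.Deterministic)
include hA

lemma abAccepts_iff_of_reflTransGen {c c' : Q × ℕ × ℕ}
    (h : ReflTransGen A.AbStep c c') (hc' : 0 < c'.2.1 + c'.2.2) :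
    A.AbAccepts c ↔ A.AbAccepts c' := by
  refine exists_congr fun qf => and_congr_right fun _ =>
    hA.abStep_rightUnique.reflTransGen_iff_of_reflTransGen h fun hf => ?_
  have := reflTransGen_abStep_count_le hf
  simp only at this
  omega

lemma not_abAccepts_of_isPeriodicPt {c : Q × ℕ × ℕ} {n : ℕ}
    (hc : IsPeriodicPt (succOrSelf A.AbStep) n c) (hn : 0 < n) (hc' : 0 < c.2.1 + c.2.2) :
    ¬ A.AbAccepts c := by
  rintro ⟨qf, -, hf⟩
  have := reflTransGen_abStep_count_le
    (hA.abStep_rightUnique.reflTransGen_of_isPeriodicPt hc hn hf)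
  simp only at this
  omega

lemma abAccepts_iff_add_of_cycle {p q : Q} {m n i j α β : ℕ}
    (h₁ : ReflTransGen A.AbStep (p, m, n) (q, i + α, j + β))
    (h₂ : ReflTransGen A.AbStep (q, i + α, j + β) (q, i, j))
    (hα : α = 0 ∨ 0 < i) (hβ : β = 0 ∨ 0 < j) (hαβ : 0 < α + β) :
    A.AbAccepts (p, m, n) ↔ A.AbAccepts (p, m + α, n + β) := by
  have hpump : ReflTransGen A.AbStep (p, m + α, n + β) (q, i + α, j + β) :=
    (reflTransGen_abStep_add h₁ (hα.imp_right (Nat.add_pos_left · α))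
      (hβ.imp_right (Nat.add_pos_left · β))).trans (reflTransGen_abStep_add h₂ hα hβ)
  rw [hA.abAccepts_iff_of_reflTransGen h₁ (by simp only; omega),
    hA.abAccepts_iff_of_reflTransGen hpump (by simp only; omega)]

lemma exists_cycle {K : ℕ} (hK : A.ConsumesAtMost K) {c : Q × ℕ × ℕ} (hc : A.AbAccepts c)
    {X : Type*} (g : Q × ℕ × ℕ → X) (t : Finset X)
    (hg : ∀ c', ReflTransGen A.AbStep c c' → g c' ∈ t)
    (hlarge : t.card * K < c.2.1 ∨ t.card * K < c.2.2) :
    ∃ c₁ c₂, ReflTransGen A.AbStep c c₁ ∧ ReflTransGen A.AbStep c₁ c₂ ∧ c₁ ≠ c₂ ∧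
      g c₁ = g c₂ ∧ c.2.1 ≤ c₂.2.1 + t.card * K ∧ c.2.2 ≤ c₂.2.2 + t.card * K := by
  obtain ⟨k₁, hk₁, k₂, hk₂, hne, hgk⟩ := Finset.exists_ne_map_eq_of_card_lt_of_maps_to
    (s := Finset.range (t.card + 1)) (by simp) (f := fun k => g ((succOrSelf A.AbStep)^[k] c))
    (fun k _ => hg _ (reflTransGen_iterate_succOrSelf k c))
  wlog hlt : k₁ < k₂ generalizing k₁ k₂
  · exact this k₂ hk₂ k₁ hk₁ hne.symm hgk.symm (by omega)
  simp only [Finset.mem_range] at hk₁ hk₂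
  obtain ⟨m, rfl⟩ := Nat.exists_eq_add_of_le hlt.le
  have hb₁ := hK.count_le_iterate_add k₁ c
  have hb₂ := hK.count_le_iterate_add (k₁ + m) c
  have hkK : k₁ * K ≤ t.card * K := Nat.mul_le_mul_right K (by omega)
  have hkK' : (k₁ + m) * K ≤ t.card * K := Nat.mul_le_mul_right K (by omega)
  set f := succOrSelf A.AbStep
  have hf : f^[k₁ + m] c = f^[m] (f^[k₁] c) := by rw [add_comm, iterate_add_apply]
  have hpos : 0 < (f^[k₁] c).2.1 + (f^[k₁] c).2.2 := by omega
  refine ⟨f^[k₁] c, f^[k₁ + m] c, reflTransGen_iterate_succOrSelf k₁ c,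
    hf ▸ reflTransGen_iterate_succOrSelf m _, fun hloop => ?_, hgk, by omega, by omega⟩
  -- an accepted run cannot loop
  refine hA.not_abAccepts_of_isPeriodicPt (n := m) (hf ▸ hloop).symm (by omega) hpos ?_
  exact (hA.abAccepts_iff_of_reflTransGen (reflTransGen_iterate_succOrSelf k₁ c) hpos).1 hc

variable [Fintype Q] {K : ℕ} (hK : A.ConsumesAtMost K)
include hK

lemma exists_state_cycle {p : Q} {m n : ℕ} (hacc : A.AbAccepts (p, m, n))
    (hm : Fintype.card Q * K < m) (hn : Fintype.card Q * K < n) :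
    ∃ q i j α β, 0 < i ∧ 0 < j ∧ 0 < α + β ∧
      ReflTransGen A.AbStep (p, m, n) (q, i + α, j + β) ∧
      ReflTransGen A.AbStep (q, i + α, j + β) (q, i, j) := by
  obtain ⟨⟨q₁, i₁, j₁⟩, ⟨q₂, i₂, j₂⟩, h₁, h₂, hne, hq, hi, hj⟩ :=
    hA.exists_cycle hK hacc Prod.fst Finset.univ (fun _ _ => Finset.mem_univ _) (Or.inl hm)
  obtain rfl : q₁ = q₂ := hq
  obtain ⟨hi₂, hj₂⟩ := reflTransGen_abStep_count_le h₂
  obtain ⟨α, rfl⟩ := Nat.exists_eq_add_of_le hi₂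
  obtain ⟨β, rfl⟩ := Nat.exists_eq_add_of_le hj₂
  simp only [Finset.card_univ] at hi hj
  exact ⟨q₁, i₂, j₂, α, β, by omega, by omega, by simp_all; omega, h₁, h₂⟩

lemma exists_abAccepts_add_right {p q : Q} {m n i j B : ℕ} (hacc : A.AbAccepts (p, m, n))
    (h : ReflTransGen A.AbStep (p, m, n) (q, i, j)) (hi : i ≤ B)
    (hj : Fintype.card Q * (B + 1) * K < j) :
    ∃ γ, 0 < γ ∧ A.AbAccepts (p, m, n + γ) := by
  have hacc' := (hA.abAccepts_iff_of_reflTransGen h (by simp only; omega)).1 hacc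
  obtain ⟨⟨q₁, i₁, j₁⟩, ⟨q₂, i₂, j₂⟩, h₁, h₂, hne, hg, -, hj₂⟩ := hA.exists_cycle hK hacc'
    (fun c => (c.1, c.2.1)) (Finset.univ ×ˢ Finset.range (B + 1))
    (fun c hc => by
      have := (reflTransGen_abStep_count_le hc).1
      simp only [Finset.mem_product, Finset.mem_univ, Finset.mem_range, true_and] at this ⊢
      omega)
    (Or.inr (by simpa [Finset.card_product] using hj))
  simp only [Prod.mk.injEq] at hg
  obtain ⟨rfl, rfl⟩ := hg
  obtain ⟨γ, rfl⟩ := Nat.exists_eq_add_of_le (reflTransGen_abStep_count_le h₂).2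
  simp only [Finset.card_product, Finset.card_univ, Finset.card_range] at hj₂
  have hγ : 0 < γ := by simp_all; omega
  have hj₂' : 0 < j₂ := by omega
  exact ⟨γ, hγ, (hA.abAccepts_iff_add_of_cycle (α := 0) (h.trans h₁) h₂ (Or.inl rfl)
    (Or.inr hj₂') (by omega)).1 hacc⟩

lemma exists_abAccepts_add_left {p q : Q} {m n i j B : ℕ} (hacc : A.AbAccepts (p, m, n))
    (h : ReflTransGen A.AbStep (p, m, n) (q, i, j)) (hj : j ≤ B)
    (hi : Fintype.card Q * (B + 1) * K < i) :
    ∃ γ, 0 < γ ∧ A.AbAccepts (p, m + γ, n) := by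
  have hacc' := (hA.abAccepts_iff_of_reflTransGen h (by simp only; omega)).1 hacc
  obtain ⟨⟨q₁, i₁, j₁⟩, ⟨q₂, i₂, j₂⟩, h₁, h₂, hne, hg, hi₂, -⟩ := hA.exists_cycle hK hacc'
    (fun c => (c.1, c.2.2)) (Finset.univ ×ˢ Finset.range (B + 1))
    (fun c hc => by
      have := (reflTransGen_abStep_count_le hc).2
      simp only [Finset.mem_product, Finset.mem_univ, Finset.mem_range, true_and] at this ⊢
      omega)
    (Or.inl (by simpa [Finset.card_product] using hi))
  simp only [Prod.mk.injEq] at hg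
  obtain ⟨rfl, rfl⟩ := hg
  obtain ⟨γ, rfl⟩ := Nat.exists_eq_add_of_le (reflTransGen_abStep_count_le h₂).1
  simp only [Finset.card_product, Finset.card_univ, Finset.card_range] at hi₂
  have hγ : 0 < γ := by simp_all; omega
  have hi₂' : 0 < i₂ := by omega
  exact ⟨γ, hγ, (hA.abAccepts_iff_add_of_cycle (β := 0) (h.trans h₁) h₂ (Or.inr hi₂')
    (Or.inl rfl) (by omega)).1 hacc⟩

end Deterministic

end WKAutomaton

open WKAutomaton

theorem Lo_not_deterministic : ¬ AcceptsWith Letter (fun _ A => A.Deterministic) Lo := by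
  rintro ⟨Q, _, A, hA, hL⟩
  have := Fintype.ofFinite Q
  have hLo (m n : ℕ) (hmn : 0 < m + n) : A.AbAccepts (A.q0, m, n) ↔ m ≤ n ∧ n ≤ 2 * m := by
    rw [← ab_mem_lang_iff, hL _ (by rw [Ne, ab_eq_nil]; omega), ab_mem_Lo]
  obtain ⟨K, hK⟩ := A.exists_consumesAtMost
  set M := Fintype.card Q * K + 1
  obtain ⟨q, i, j, α, β, hi, hj, hαβ, h₁, h₂⟩ :=
    hA.exists_state_cycle hK ((hLo M M (by omega)).2 (by omega)) (by omega) (by omega)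
  obtain ⟨hiM, hjM⟩ := reflTransGen_abStep_count_le h₁
  simp only at hiM hjM
  set k := Fintype.card Q * (M + 1) * K + 1 with hk
  rcases lt_or_ge β (2 * α) with hβ | hβ
  · obtain ⟨δ, hδ⟩ : ∃ δ, 2 * α = β + δ + 1 := ⟨2 * α - β - 1, by omega⟩
    have hkδ := Nat.le_mul_of_pos_right k (Nat.add_pos_right δ one_pos)
    have h := reflTransGen_abStep_of_cycle h₁ h₂ hi hj k 0 (M + k * (δ + 1))
    rw [show M + k * β + (M + k * (δ + 1)) = 2 * (M + k * α) by
      linear_combination k * hδ.symm] at h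
    obtain ⟨γ, hγ, hacc⟩ := hA.exists_abAccepts_add_right hK
      ((hLo _ _ (by omega)).2 (by omega)) h (B := M) (by omega) (by omega)
    have := (hLo _ _ (by omega)).1 hacc
    omega
  · obtain ⟨δ, hδ⟩ : ∃ δ, β = α + δ + 1 := ⟨β - α - 1, by omega⟩
    have hkδ := Nat.le_mul_of_pos_right k (Nat.add_pos_right δ one_pos)
    have h := reflTransGen_abStep_of_cycle h₁ h₂ hi hj k (k * (δ + 1)) 0
    rw [show M + k * α + k * (δ + 1) = M + k * β + 0 by linear_combination k * hδ.symm] at h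
    obtain ⟨γ, hγ, hacc⟩ := hA.exists_abAccepts_add_left hK
      ((hLo _ _ (by omega)).2 (by omega)) h (B := M) (by omega) (by omega)
    have := (hLo _ _ (by omega)).1 hacc
    omega

/-- The language `L_o = { aᵐbⁿ : m ≤ n ≤ 2m }` is accepted by a stateless sensing
5'→3' WK automaton, but `L_o` is not accepted by any deterministic sensing
5'→3' WK automaton (languages compared modulo the empty word). -/
theorem Lo_stateless_not_deterministic :
    AcceptsWith Letter (fun _ A => A.Stateless) Lo ∧
    ¬ AcceptsWith Letter (fun _ A => A.Deterministic) Lo :=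
  ⟨⟨Unit, inferInstance, loAutomaton, ⟨fun _ => rfl, rfl⟩, fun _ _ => by rw [loAutomaton_lang]⟩,
    Lo_not_deterministic⟩
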